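/- Let k ≥ 0 and n ≥ 1. For each set partition π of Fin k into at most n blocks, define the function X_π : (Fin k → Fin n) → ℂ by X_π(J) = 1 if ker(J) = π and 0 otherwise. Then {X_π : π a set partition of Fin k with at most n blocks} is a basis of the complex vector space of functions f : (Fin k → Fin n) → ℂ satisfying f(σ ∘ J) = f(J) for all σ ∈ S_n; in particular this space of S_n-invariant functions (the space of k-order permutation invariant layer functions Hom_{S_n}(M_n^{⊗k}, M_n^{⊗0})) has dimension Bell(k, n). -/

import Mathlib

noncomputable section
open scoped Classical

/-- `Bell m n`: the number of set partitions of `Fin m` (encoded as setoids,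
i.e. equivalence relations) into at most `n` blocks. -/
def Bell (m n : ℕ) : ℕ :=
  Nat.card {π : Setoid (Fin m) // Nat.card (Quotient π) ≤ n}

/-- The space `Hom_{S_n}(M_n^{⊗k}, M_n^{⊗0})` of `S_n`-invariant functions
`f : (Fin k → Fin n) → ℂ`, i.e. those with `f (σ ∘ J) = f J` for all `σ ∈ S_n`. -/
def MInv (n k : ℕ) : Submodule ℂ ((Fin k → Fin n) → ℂ) where
  carrier := {f | ∀ (σ : Equiv.Perm (Fin n)) (J : Fin k → Fin n), f (⇑σ ∘ J) = f J}
  add_mem' := by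
    intro a b ha hb σ J
    simp only [Pi.add_apply, ha σ J, hb σ J]
  zero_mem' := by intro σ J; rfl
  smul_mem' := by
    intro c a ha σ J
    simp only [Pi.smul_apply, ha σ J]

/-!
An `S_n`-invariant function is constant on the `S_n`-orbits of tuples, and two tuples lie in the
same orbit exactly when they have the same kernel: a bijection between their images extends to a
permutation of `Fin n`. The kernels of tuples `Fin k → Fin n` are exactly the partitions of
`Fin k` with at most `n` blocks, so precomposition with `J ↦ ker J` identifies functions on these
partitions with invariant functions, and carries the standard basis to the `X_π`.
-/

namespace Setoid

variable {α β γ : Type*}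

instance [Finite α] : Finite (Setoid α) :=
  .of_injective (fun r : Setoid α => r.r) fun _ _ h =>
    Setoid.ext fun x y => Iff.of_eq (congrFun₂ h x y)

theorem ker_comp_of_injective {g : β → γ} (hg : Function.Injective g) (f : α → β) :
    ker (g ∘ f) = ker f := by
  ext x y
  exact hg.eq_iff

theorem card_quotient_ker_le [Finite β] (f : α → β) :
    Nat.card (Quotient (ker f)) ≤ Nat.card β :=
  Nat.card_le_card_of_injective _ (kerLift_injective f)

theorem exists_ker_eq [Finite α] [Finite β] (r : Setoid α)
    (h : Nat.card (Quotient r) ≤ Nat.card β) : ∃ f : α → β, ker f = r := by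
  have := Fintype.ofFinite (Quotient r)
  have := Fintype.ofFinite β
  rw [Nat.card_eq_fintype_card, Nat.card_eq_fintype_card] at h
  obtain ⟨g⟩ := Function.Embedding.nonempty_of_card_le h
  exact ⟨g ∘ Quotient.mk'', by rw [ker_comp_of_injective g.injective, ker_mk_eq]⟩

theorem exists_perm_comp_eq_of_ker_eq [Finite α] {f f' : α → β} (h : ker f = ker f') :
    ∃ σ : Equiv.Perm β, σ ∘ f = f' := by
  let g : Quotient (ker f) → β := Quotient.lift f' fun a b hab => show ker f' a b by rwa [← h]
  have hg : Function.Injective g := by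
    rintro ⟨a⟩ ⟨b⟩ hab
    exact Quotient.sound (show ker f a b by rw [h]; exact hab)
  obtain ⟨σ, hσ⟩ := Equiv.Perm.exists_extending_pair _ g (kerLift_injective f) hg
  exact ⟨σ, funext fun a => hσ ⟦a⟧⟩

end Setoid

abbrev PartitionsAtMost (α : Type*) (n : ℕ) : Type _ :=
  {π : Setoid α // Nat.card (Quotient π) ≤ n}

variable {k n : ℕ}

def kerPartition (J : Fin k → Fin n) : PartitionsAtMost (Fin k) n :=
  ⟨Setoid.ker J, by simpa using Setoid.card_quotient_ker_le J⟩

theorem kerPartition_surjective : Function.Surjective (kerPartition (k := k) (n := n)) := by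
  rintro ⟨π, hπ⟩
  obtain ⟨J, hJ⟩ := Setoid.exists_ker_eq (β := Fin n) π (by simpa using hπ)
  exact ⟨J, Subtype.ext hJ⟩

theorem kerPartition_perm_comp (σ : Equiv.Perm (Fin n)) (J : Fin k → Fin n) :
    kerPartition (σ ∘ J) = kerPartition J :=
  Subtype.ext (Setoid.ker_comp_of_injective σ.injective J)

theorem range_funLeft_kerPartition :
    LinearMap.range (LinearMap.funLeft ℂ ℂ (kerPartition (k := k) (n := n))) = MInv n k := by
  ext f
  constructor
  · rintro ⟨c, rfl⟩ σ J
    simp [LinearMap.funLeft, kerPartition_perm_comp]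
  · intro hf
    refine ⟨f ∘ Function.surjInv kerPartition_surjective, funext fun J => ?_⟩
    obtain ⟨σ, hσ⟩ := Setoid.exists_perm_comp_eq_of_ker_eq
      (congrArg Subtype.val (Function.surjInv_eq kerPartition_surjective (kerPartition J)))
    simp only [LinearMap.funLeft_apply, Function.comp_apply]
    rw [← hf σ, hσ]

def MInv.equivFun : (PartitionsAtMost (Fin k) n → ℂ) ≃ₗ[ℂ] MInv n k :=
  (LinearEquiv.ofInjective _ (LinearMap.funLeft_injective_of_surjective _ _ _
    kerPartition_surjective)).trans (LinearEquiv.ofEq _ _ range_funLeft_kerPartition)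

theorem MInv.equivFun_apply (c : PartitionsAtMost (Fin k) n → ℂ) (J : Fin k → Fin n) :
    (MInv.equivFun c : (Fin k → Fin n) → ℂ) J = c (kerPartition J) :=
  rfl

theorem MInv_basis_general (k n : ℕ) :
    (∃ b : Module.Basis {π : Setoid (Fin k) // Nat.card (Quotient π) ≤ n} ℂ ↥(MInv n k),
      ∀ (π : {π : Setoid (Fin k) // Nat.card (Quotient π) ≤ n}) (J : Fin k → Fin n),
        (b π : (Fin k → Fin n) → ℂ) J =
          if Setoid.ker J = (π : Setoid (Fin k)) then 1 else 0) ∧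
    Module.finrank ℂ ↥(MInv n k) = Bell k n := by
  let b := (Pi.basisFun ℂ (PartitionsAtMost (Fin k) n)).map MInv.equivFun
  refine ⟨⟨b, fun π J => ?_⟩, Module.finrank_eq_nat_card_basis b⟩
  simp only [b, Module.Basis.map_apply, MInv.equivFun_apply, Pi.basisFun_apply, Pi.single_apply,
    Subtype.ext_iff, kerPartition]

/-- the functions `X_π`, for `π` a set partition of `Fin k` with at most
`n` blocks, where `X_π J = 1` if `ker J = π` and `0` otherwise, form a basis of the
space of `S_n`-invariant functions `(Fin k → Fin n) → ℂ`; in particular that space has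
dimension `Bell(k, n)`. -/
theorem MInv_basis (k n : ℕ) (hn : 1 ≤ n) :
    (∃ b : Module.Basis {π : Setoid (Fin k) // Nat.card (Quotient π) ≤ n} ℂ ↥(MInv n k),
      ∀ (π : {π : Setoid (Fin k) // Nat.card (Quotient π) ≤ n}) (J : Fin k → Fin n),
        (b π : (Fin k → Fin n) → ℂ) J =
          if Setoid.ker J = (π : Setoid (Fin k)) then 1 else 0) ∧
    Module.finrank ℂ ↥(MInv n k) = Bell k n :=
  MInv_basis_general k n

end
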